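/- Let u : ℝ³ → ℝ³ be smooth, ℤ³-periodic, and divergence-free (∑_i ∂_i u_i = 0), let h : ℝ³ → ℝ be smooth and ℤ³-periodic, and let m ∈ ℝ³ be a fixed unit vector. Set q = ∑_{i,j} (∂_i u_j) m_i m_j. Then ∫_{[0,1]³} (∇×u) · ( ∇×( ∇·( q·h·(m ⊗ m) ) ) ) dx = ∫_{[0,1]³} Δq · q · h dx. -/

import Mathlib

open Matrix MeasureTheory

/-- The partial derivative `∂ₖ f` of a function `f : ℝ³ → ℝ`. -/
noncomputable def pd (k : Fin 3) (f : (Fin 3 → ℝ) → ℝ) : (Fin 3 → ℝ) → ℝ :=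
  fun x => fderiv ℝ f x (Pi.single k 1)

/-- The Laplacian `Δf = ∑ᵢ ∂ᵢ²f` of a function `f : ℝ³ → ℝ`. -/
noncomputable def lap (f : (Fin 3 → ℝ) → ℝ) : (Fin 3 → ℝ) → ℝ :=
  fun x => ∑ k, pd k (pd k f) x

/-- The curl `∇×v` of a vector field `v : ℝ³ → ℝ³`. -/
noncomputable def curl (v : (Fin 3 → ℝ) → Fin 3 → ℝ) : (Fin 3 → ℝ) → Fin 3 → ℝ :=
  fun x => ![pd 1 (fun y => v y 2) x - pd 2 (fun y => v y 1) x,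
             pd 2 (fun y => v y 0) x - pd 0 (fun y => v y 2) x,
             pd 0 (fun y => v y 1) x - pd 1 (fun y => v y 0) x]

/-- The divergence `(∇·T)ₖ = ∑ℓ ∂ℓ Tℓₖ` of a matrix field `T : ℝ³ → M₃(ℝ)`. -/
noncomputable def divT (T : (Fin 3 → ℝ) → Matrix (Fin 3) (Fin 3) ℝ) :
    (Fin 3 → ℝ) → Fin 3 → ℝ :=
  fun x k => ∑ l, pd l (fun z => T z l k) x

/-- `q = (∇u) : m⊗m = ∑ᵢⱼ (∂ᵢuⱼ) mᵢ mⱼ`. -/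
noncomputable def qf (u : (Fin 3 → ℝ) → Fin 3 → ℝ) (m : Fin 3 → ℝ) : (Fin 3 → ℝ) → ℝ :=
  fun x => ∑ i, ∑ j, pd i (fun y => u y j) x * m i * m j

def Per (F : (Fin 3 → ℝ) → ℝ) : Prop :=
  ∀ (x : Fin 3 → ℝ) (n : Fin 3 → ℤ), F (x + fun k => (n k : ℝ)) = F x

lemma contDiff_pd {f : (Fin 3 → ℝ) → ℝ} (hf : ContDiff ℝ (⊤ : ℕ∞) f) (k : Fin 3) :
    ContDiff ℝ (⊤ : ℕ∞) (pd k f) :=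
  (hf.fderiv_right (m := (⊤ : ℕ∞)) (by simp)).clm_apply contDiff_const

lemma integral_pd_eq_zero (F : (Fin 3 → ℝ) → ℝ) (hF : ContDiff ℝ (⊤ : ℕ∞) F) (hper : Per F)
    (j : Fin 3) : ∫ x in Set.Icc (0 : Fin 3 → ℝ) 1, pd j F x = 0 := by
  have hd : Differentiable ℝ F := hF.differentiable (by simp)
  set L : ℝ →L[ℝ] (Fin 3 → ℝ) :=
    ContinuousLinearMap.pi (fun i => if i = j then ContinuousLinearMap.id ℝ ℝ else 0) with hL
  have hLapp : ∀ (v : ℝ) (i : Fin 3), L v i = if i = j then v else 0 := by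
    intro v i
    simp [hL, ContinuousLinearMap.pi_apply]
    split <;> simp
  have key := integral_divergence_of_hasFDerivAt_off_countable
    (a := (0 : Fin 3 → ℝ)) (b := 1) (le_of_lt (by norm_num : (0: Fin 3 → ℝ) < 1))
    (f := fun x => L (F x))
    (f' := fun x => L.comp (fderiv ℝ F x))
    ∅ Set.countable_empty
    (L.continuous.comp hF.continuous).continuousOn
    (fun x _ => L.hasFDerivAt.comp x (hd x).hasFDerivAt)
    (by
      apply Continuous.integrableOn_Icc
      apply continuous_finset_sum _ fun i _ => ?_
      simp only [ContinuousLinearMap.comp_apply, hLapp]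
      split
      · exact (contDiff_pd hF i).continuous
      · exact continuous_const)
  have hdivsum : ∀ x, (∑ i, L.comp (fderiv ℝ F x) (Pi.single i 1) i) = pd j F x := by
    intro x
    simp only [ContinuousLinearMap.comp_apply, hLapp]
    simp [pd]
  have hins : ∀ (x : Fin 2 → ℝ), Fin.insertNth j (1:ℝ) x
      = Fin.insertNth j (0:ℝ) x + (fun k => (((Pi.single j (1:ℤ) : Fin 3 → ℤ)) k : ℝ)) := by
    intro x; funext k
    refine Fin.succAboveCases j ?_ ?_ k
    · simp
    · intro l
      simp [Pi.single_apply, Fin.succAbove_ne j l]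
  have hc : ∀ i x, (fun x => L (F x)) x i = (fun x => L (F x)) x i := fun _ _ => rfl
  rw [show (∫ x in Set.Icc (0 : Fin 3 → ℝ) 1, pd j F x)
      = ∫ x in Set.Icc (0 : Fin 3 → ℝ) 1, ∑ i, L.comp (fderiv ℝ F x) (Pi.single i 1) i from by
    congr 1; funext x; rw [hdivsum]]
  rw [key]
  apply Finset.sum_eq_zero
  intro i _
  by_cases hij : i = j
  · subst hij
    have : ∀ x : Fin 2 → ℝ, L (F (Fin.insertNth i ((1 : Fin 3 → ℝ) i) x)) i
        = L (F (Fin.insertNth i ((0 : Fin 3 → ℝ) i) x)) i := by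
      intro x
      simp only [Pi.one_apply, Pi.zero_apply]
      rw [hins x, hper]
    simp only [this, sub_self]
  · have h1 : ∀ y : Fin 3 → ℝ, L (F y) i = 0 := by
      intro y; rw [hLapp]; simp [hij]
    simp only [h1, integral_zero, sub_self]

lemma pd_congr (k : Fin 3) {f g : (Fin 3 → ℝ) → ℝ} (H : ∀ x, f x = g x) : pd k f = pd k g := by
  have : f = g := funext H
  rw [this]

lemma pd_mul (k : Fin 3) {f g : (Fin 3 → ℝ) → ℝ} (hf : ContDiff ℝ (⊤ : ℕ∞) f) (hg : ContDiff ℝ (⊤ : ℕ∞) g)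
    (x : Fin 3 → ℝ) :
    pd k (fun y => f y * g y) x = pd k f x * g x + f x * pd k g x := by
  simp only [pd]
  rw [fderiv_fun_mul (hf.differentiable (by simp) x) (hg.differentiable (by simp) x)]
  simp only [ContinuousLinearMap.add_apply, ContinuousLinearMap.smul_apply, smul_eq_mul]
  ring

lemma pd_mul_const (k : Fin 3) {f : (Fin 3 → ℝ) → ℝ} (hf : ContDiff ℝ (⊤ : ℕ∞) f) (c : ℝ)
    (x : Fin 3 → ℝ) :
    pd k (fun y => f y * c) x = pd k f x * c := by
  simp only [pd]
  rw [fderiv_mul_const (hf.differentiable (by simp) x)]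
  simp [mul_comm]

lemma pd_sum (k : Fin 3) {ι : Type*} (s : Finset ι) (f : ι → (Fin 3 → ℝ) → ℝ)
    (hf : ∀ i ∈ s, ContDiff ℝ (⊤ : ℕ∞) (f i)) (x : Fin 3 → ℝ) :
    pd k (fun y => ∑ i ∈ s, f i y) x = ∑ i ∈ s, pd k (f i) x := by
  simp only [pd]
  rw [fderiv_fun_sum (fun i hi => (hf i hi).differentiable (by simp) x)]
  simp

lemma pd_comm {f : (Fin 3 → ℝ) → ℝ} (hf : ContDiff ℝ (⊤ : ℕ∞) f) (i j : Fin 3) (x : Fin 3 → ℝ) :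
    pd i (pd j f) x = pd j (pd i f) x := by
  have hsym : IsSymmSndFDerivAt ℝ f x := hf.contDiffAt.isSymmSndFDerivAt (by
    rw [minSmoothness_of_isRCLikeNormedField]; exact WithTop.coe_le_coe.mpr (le_top : (2:ℕ∞) ≤ ⊤))
  have hD : ContDiff ℝ (⊤ : ℕ∞) (fderiv ℝ f) := hf.fderiv_right (m := (⊤ : ℕ∞)) (by simp)
  have key : ∀ a b : Fin 3, pd a (pd b f) x
      = fderiv ℝ (fderiv ℝ f) x (Pi.single a 1) (Pi.single b 1) := by
    intro a b
    unfold pd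
    rw [fderiv_clm_apply (c := fderiv ℝ f) (u := fun _ => Pi.single b (1:ℝ))
      (hD.differentiable (by simp) x) (differentiableAt_const _)]
    simp
  rw [key i j, key j i]
  exact hsym _ _

lemma Per.pdP {F : (Fin 3 → ℝ) → ℝ} (hper : Per F) (hF : ContDiff ℝ (⊤ : ℕ∞) F) (k : Fin 3) :
    Per (pd k F) := by
  intro x n
  set c : Fin 3 → ℝ := fun k => (n k : ℝ) with hc
  have hd := hF.differentiable (by simp)
  have h1 : HasFDerivAt F (fderiv ℝ F (x + c)) x := by
    have h2 : HasFDerivAt (fun y => F (y + c))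
        ((fderiv ℝ F (x + c)).comp (ContinuousLinearMap.id ℝ (Fin 3 → ℝ))) x :=
      (hd (x + c)).hasFDerivAt.comp x ((hasFDerivAt_id x).add_const c)
    rw [ContinuousLinearMap.comp_id] at h2
    have h3 : (fun y => F (y + c)) = F := funext fun y => hper y n
    rwa [h3] at h2
  simp only [pd]
  rw [h1.fderiv]

lemma Per.mulP {A B : (Fin 3 → ℝ) → ℝ} (pA : Per A) (pB : Per B) :
    Per (fun x => A x * B x) := fun x n => by simp only [pA x n, pB x n]

lemma cont_box {f : (Fin 3 → ℝ) → ℝ} (hf : Continuous f) :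
    MeasureTheory.IntegrableOn f (Set.Icc (0 : Fin 3 → ℝ) 1) :=
  hf.integrableOn_Icc

lemma ibp (j : Fin 3) {A B : (Fin 3 → ℝ) → ℝ} (hA : ContDiff ℝ (⊤ : ℕ∞) A) (hB : ContDiff ℝ (⊤ : ℕ∞) B)
    (pA : Per A) (pB : Per B) :
    ∫ x in Set.Icc (0 : Fin 3 → ℝ) 1, A x * pd j B x
      = - ∫ x in Set.Icc (0 : Fin 3 → ℝ) 1, pd j A x * B x := by
  have h0 := integral_pd_eq_zero (fun x => A x * B x) (hA.mul hB)
    (fun x n => by simp only [pA x n, pB x n]) j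
  have h1 : pd j (fun y => A y * B y) = fun x => pd j A x * B x + A x * pd j B x :=
    funext (pd_mul j hA hB)
  rw [h1, integral_add
    (cont_box (((contDiff_pd hA j).continuous.fun_mul hB.continuous)))
    (cont_box ((hA.continuous.fun_mul (contDiff_pd hB j).continuous)))] at h0
  linarith

lemma pd_comm3 {f : (Fin 3 → ℝ) → ℝ} (hf : ContDiff ℝ (⊤ : ℕ∞) f) (l j : Fin 3) (x : Fin 3 → ℝ) :
    pd l (pd j (pd j f)) x = pd j (pd j (pd l f)) x := by
  have h1 : pd l (pd j (pd j f)) x = pd j (pd l (pd j f)) x :=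
    pd_comm (contDiff_pd hf j) l j x
  have h2 : pd l (pd j f) = pd j (pd l f) := funext (pd_comm hf l j)
  rw [h1, h2]


/-- Three-dimensional cancellation structure: for a smooth ℤ³-periodic divergence-free
`u : ℝ³ → ℝ³`, a smooth ℤ³-periodic `h : ℝ³ → ℝ`, and a unit vector `m ∈ ℝ³`, with
`q = ∑ᵢⱼ (∂ᵢuⱼ)mᵢmⱼ`:
`∫_{[0,1]³} (∇×u)·(∇×(∇·(q·h·(m⊗m)))) = ∫_{[0,1]³} Δq·q·h`. -/
theorem viscous_stress_cancellation_3D (u : (Fin 3 → ℝ) → Fin 3 → ℝ)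
    (h : (Fin 3 → ℝ) → ℝ) (m : Fin 3 → ℝ)
    (hu : ∀ j, ContDiff ℝ (⊤ : ℕ∞) fun x => u x j)
    (huper : ∀ (x : Fin 3 → ℝ) (n : Fin 3 → ℤ) (j : Fin 3),
      u (x + fun k => (n k : ℝ)) j = u x j)
    (hdiv : ∀ x, ∑ i, pd i (fun y => u y i) x = 0)
    (hh : ContDiff ℝ (⊤ : ℕ∞) h)
    (hhper : ∀ (x : Fin 3 → ℝ) (n : Fin 3 → ℤ), h (x + fun k => (n k : ℝ)) = h x)
    (hm : ∑ i, m i ^ 2 = 1) :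
    ∫ x in Set.Icc (0 : Fin 3 → ℝ) 1,
        ∑ i, curl u x i * curl (divT fun z => (qf u m z * h z) • vecMulVec m m) x i
      = ∫ x in Set.Icc (0 : Fin 3 → ℝ) 1, lap (qf u m) x * qf u m x * h x := by
  classical
  -- basic facts
  have hpu : ∀ k : Fin 3, Per (fun x => u x k) := fun k x n => huper x n k
  have hcU : ∀ j k : Fin 3, ContDiff ℝ (⊤ : ℕ∞) (pd j (fun y => u y k)) :=
    fun j k => contDiff_pd (hu k) j
  have hpU : ∀ j k : Fin 3, Per (pd j (fun y => u y k)) :=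
    fun j k => Per.pdP (hpu k) (hu k) j
  have hcU2 : ∀ i j k : Fin 3, ContDiff ℝ (⊤ : ℕ∞) (pd i (pd j (fun y => u y k))) :=
    fun i j k => contDiff_pd (hcU j k) i
  have hpU2 : ∀ i j k : Fin 3, Per (pd i (pd j (fun y => u y k))) :=
    fun i j k => Per.pdP (hpU j k) (hcU j k) i
  have hq : ContDiff ℝ (⊤ : ℕ∞) (qf u m) := by
    unfold qf
    exact ContDiff.sum fun i _ => ContDiff.sum fun j _ =>
      ((hcU i j).mul contDiff_const).mul contDiff_const
  have hpq : Per (qf u m) := by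
    intro x n
    show (∑ i, ∑ j, pd i (fun y => u y j) (x + fun k => (n k:ℝ)) * m i * m j) = _
    exact Finset.sum_congr rfl fun i _ => Finset.sum_congr rfl fun j _ => by
      rw [hpU i j x n]
  set g : (Fin 3 → ℝ) → ℝ := fun x => qf u m x * h x with hgdef
  have hg : ContDiff ℝ (⊤ : ℕ∞) g := hq.mul hh
  have hpg : Per g := Per.mulP hpq hhper
  set f1 : (Fin 3 → ℝ) → ℝ := fun x => ∑ l, m l * pd l g x with hf1def
  have hf1 : ContDiff ℝ (⊤ : ℕ∞) f1 := ContDiff.sum fun l _ => contDiff_const.mul (contDiff_pd hg l)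
  have hpf1 : Per f1 := by
    intro x n
    show (∑ l, m l * pd l g (x + fun k => (n k:ℝ))) = ∑ l, m l * pd l g x
    exact Finset.sum_congr rfl fun l _ => by rw [Per.pdP hpg hg l x n]
  -- step 1 : compute divT
  have hdivT : (divT fun z => (qf u m z * h z) • vecMulVec m m) = fun x k => f1 x * m k := by
    funext x k
    show (∑ l, pd l (fun z => ((qf u m z * h z) • vecMulVec m m : Matrix (Fin 3) (Fin 3) ℝ) l k) x)
      = f1 x * m k
    have e1 : ∀ l : Fin 3,
        (fun z => ((qf u m z * h z) • vecMulVec m m : Matrix (Fin 3) (Fin 3) ℝ) l k)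
          = fun z => g z * (m l * m k) := by
      intro l; funext z
      simp [Matrix.smul_apply, Matrix.vecMulVec_apply, smul_eq_mul, hgdef]
    calc (∑ l, pd l (fun z => ((qf u m z * h z) • vecMulVec m m : Matrix (Fin 3) (Fin 3) ℝ) l k) x)
        = ∑ l, pd l g x * (m l * m k) := by
          refine Finset.sum_congr rfl fun l _ => ?_
          rw [e1 l, pd_mul_const l hg (m l * m k) x]
      _ = f1 x * m k := by
          show _ = (∑ l, m l * pd l g x) * m k
          rw [Finset.sum_mul]
          exact Finset.sum_congr rfl fun l _ => by ring
  rw [hdivT]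
  -- step 2 : pointwise expansion of the left integrand
  have hcv : ∀ x, curl (fun z k => f1 z * m k) x
      = ![pd 1 f1 x * m 2 - pd 2 f1 x * m 1,
          pd 2 f1 x * m 0 - pd 0 f1 x * m 2,
          pd 0 f1 x * m 1 - pd 1 f1 x * m 0] := by
    intro x
    show (![pd 1 (fun y => f1 y * m 2) x - pd 2 (fun y => f1 y * m 1) x,
            pd 2 (fun y => f1 y * m 0) x - pd 0 (fun y => f1 y * m 2) x,
            pd 0 (fun y => f1 y * m 1) x - pd 1 (fun y => f1 y * m 0) x] : Fin 3 → ℝ) = _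
    rw [pd_mul_const 1 hf1 (m 2) x, pd_mul_const 2 hf1 (m 1) x,
        pd_mul_const 2 hf1 (m 0) x, pd_mul_const 0 hf1 (m 2) x,
        pd_mul_const 0 hf1 (m 1) x, pd_mul_const 1 hf1 (m 0) x]
  have hpoint : (fun x => ∑ i, curl u x i * curl (fun z k => f1 z * m k) x i)
      = fun x => (∑ j, ∑ k, m k * (pd j (fun y => u y k) x * pd j f1 x))
               - (∑ j, ∑ k, m j * (pd j (fun y => u y k) x * pd k f1 x)) := by
    funext x
    rw [show (∑ i, curl u x i * curl (fun z k => f1 z * m k) x i)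
        = ∑ i, curl u x i * (![pd 1 f1 x * m 2 - pd 2 f1 x * m 1,
            pd 2 f1 x * m 0 - pd 0 f1 x * m 2,
            pd 0 f1 x * m 1 - pd 1 f1 x * m 0] : Fin 3 → ℝ) i from by rw [hcv x]]
    show (∑ i, (![pd 1 (fun y => u y 2) x - pd 2 (fun y => u y 1) x,
            pd 2 (fun y => u y 0) x - pd 0 (fun y => u y 2) x,
            pd 0 (fun y => u y 1) x - pd 1 (fun y => u y 0) x] : Fin 3 → ℝ) i *
          (![pd 1 f1 x * m 2 - pd 2 f1 x * m 1,
            pd 2 f1 x * m 0 - pd 0 f1 x * m 2,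
            pd 0 f1 x * m 1 - pd 1 f1 x * m 0] : Fin 3 → ℝ) i) = _
    simp only [Fin.sum_univ_three, Matrix.cons_val_zero, Matrix.cons_val_one, Matrix.head_cons,
      Matrix.cons_val_two, Matrix.tail_cons]
    ring
  rw [hpoint]
  -- continuity helpers
  have cpd : ∀ (F : (Fin 3 → ℝ) → ℝ), ContDiff ℝ (⊤ : ℕ∞) F → ∀ a : Fin 3, Continuous (pd a F) :=
    fun F hF a => (contDiff_pd hF a).continuous
  have contf1 : Continuous f1 := hf1.continuous
  have contg : Continuous g := hg.continuous
  -- vanishing of the column-divergence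
  have hz : ∀ (j : Fin 3) (x : Fin 3 → ℝ), (∑ k : Fin 3, pd k (pd j (fun y => u y k)) x) = 0 := by
    intro j x
    rw [Finset.sum_congr rfl fun k (_ : k ∈ Finset.univ) => pd_comm (hu k) k j x,
      ← pd_sum j Finset.univ (fun k => pd k (fun y => u y k)) (fun k _ => hcU k k) x,
      pd_congr j (g := fun _ => (0:ℝ)) (fun y => hdiv y)]
    simp [pd]
  -- integrability of the two double sums
  have int1 : MeasureTheory.IntegrableOn
      (fun x => ∑ j, ∑ k, m k * (pd j (fun y => u y k) x * pd j f1 x))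
      (Set.Icc (0 : Fin 3 → ℝ) 1) :=
    cont_box (continuous_finset_sum _ fun j _ => continuous_finset_sum _ fun k _ =>
      continuous_const.mul ((cpd _ (hu k) j).mul (cpd _ hf1 j)))
  have int2 : MeasureTheory.IntegrableOn
      (fun x => ∑ j, ∑ k, m j * (pd j (fun y => u y k) x * pd k f1 x))
      (Set.Icc (0 : Fin 3 → ℝ) 1) :=
    cont_box (continuous_finset_sum _ fun j _ => continuous_finset_sum _ fun k _ =>
      continuous_const.mul ((cpd _ (hu k) j).mul (cpd _ hf1 k)))
  rw [integral_sub int1 int2]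
  -- the second double sum integrates to zero
  have hS2 : (∫ x in Set.Icc (0 : Fin 3 → ℝ) 1,
      ∑ j, ∑ k, m j * (pd j (fun y => u y k) x * pd k f1 x)) = 0 := by
    rw [integral_finset_sum _ (fun j _ => cont_box (continuous_finset_sum _ fun k _ =>
      continuous_const.fun_mul ((cpd _ (hu k) j).fun_mul (cpd _ hf1 k))))]
    apply Finset.sum_eq_zero
    intro j _
    rw [integral_finset_sum _ (fun k _ => cont_box
      (continuous_const.fun_mul ((cpd _ (hu k) j).fun_mul (cpd _ hf1 k))))]
    have e : ∀ k : Fin 3, (∫ x in Set.Icc (0 : Fin 3 → ℝ) 1,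
        m j * (pd j (fun y => u y k) x * pd k f1 x))
        = m j * -(∫ x in Set.Icc (0 : Fin 3 → ℝ) 1, pd k (pd j (fun y => u y k)) x * f1 x) := by
      intro k
      rw [integral_const_mul, ibp k (hcU j k) hf1 (hpU j k) hpf1]
    rw [Finset.sum_congr rfl fun k (_ : k ∈ Finset.univ) => e k]
    simp only [mul_neg, Finset.sum_neg_distrib, ← Finset.mul_sum]
    rw [← integral_finset_sum _ (fun k _ => cont_box ((cpd _ (hcU j k) k).fun_mul contf1))]
    have hzz : (fun x => ∑ k : Fin 3, pd k (pd j (fun y => u y k)) x * f1 x)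
        = fun _ => (0:ℝ) := by
      funext x
      rw [← Finset.sum_mul, hz j x, zero_mul]
    rw [hzz]
    simp
  rw [hS2, sub_zero]
  -- the first double sum after double integration by parts
  have hS1 : (∫ x in Set.Icc (0 : Fin 3 → ℝ) 1,
      ∑ j, ∑ k, m k * (pd j (fun y => u y k) x * pd j f1 x))
      = ∑ j : Fin 3, ∑ k : Fin 3, ∑ l : Fin 3, m k * (m l *
        ∫ x in Set.Icc (0 : Fin 3 → ℝ) 1, pd l (pd j (pd j (fun y => u y k))) x * g x) := by
    rw [integral_finset_sum _ (fun j _ => cont_box (continuous_finset_sum _ fun k _ =>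
      continuous_const.fun_mul ((cpd _ (hu k) j).fun_mul (cpd _ hf1 j))))]
    refine Finset.sum_congr rfl fun j _ => ?_
    rw [integral_finset_sum _ (fun k _ => cont_box
      (continuous_const.fun_mul ((cpd _ (hu k) j).fun_mul (cpd _ hf1 j))))]
    refine Finset.sum_congr rfl fun k _ => ?_
    rw [integral_const_mul, ibp j (hcU j k) hf1 (hpU j k) hpf1]
    have e2 : (fun x => pd j (pd j (fun y => u y k)) x * f1 x)
        = fun x => ∑ l, m l * (pd j (pd j (fun y => u y k)) x * pd l g x) := by
      funext x
      show pd j (pd j (fun y => u y k)) x * (∑ l, m l * pd l g x) = _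
      rw [Finset.mul_sum]
      exact Finset.sum_congr rfl fun l _ => by ring
    rw [e2, integral_finset_sum _ (fun l _ => cont_box
      (continuous_const.fun_mul ((cpd _ (hcU j k) j).fun_mul (cpd _ hg l))))]
    have e3 : ∀ l : Fin 3, (∫ x in Set.Icc (0 : Fin 3 → ℝ) 1,
        m l * (pd j (pd j (fun y => u y k)) x * pd l g x))
        = m l * -(∫ x in Set.Icc (0 : Fin 3 → ℝ) 1,
            pd l (pd j (pd j (fun y => u y k))) x * g x) := by
      intro l
      rw [integral_const_mul, ibp l (hcU2 j j k) hg (hpU2 j j k) hpg]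
    rw [Finset.sum_congr rfl fun l (_ : l ∈ Finset.univ) => e3 l]
    simp only [mul_neg, Finset.sum_neg_distrib, neg_neg, Finset.mul_sum]
  rw [hS1]
  -- identify the right-hand side
  have hpdq : ∀ jj : Fin 3, pd jj (qf u m)
      = fun x => ∑ i, ∑ k, pd jj (pd i (fun y => u y k)) x * m i * m k := by
    intro jj; funext x
    have e0 : pd jj (qf u m)
        = pd jj (fun y => ∑ i, ∑ k, pd i (fun y' => u y' k) y * m i * m k) :=
      pd_congr jj (fun y => rfl)
    rw [e0, pd_sum jj Finset.univ
      (fun i => fun y => ∑ k, pd i (fun y' => u y' k) y * m i * m k)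
      (fun i _ => ContDiff.sum fun k _ => ((hcU i k).mul contDiff_const).mul contDiff_const) x]
    refine Finset.sum_congr rfl fun i _ => ?_
    rw [pd_sum jj Finset.univ
      (fun k => fun y => pd i (fun y' => u y' k) y * m i * m k)
      (fun k _ => ((hcU i k).mul contDiff_const).mul contDiff_const) x]
    refine Finset.sum_congr rfl fun k _ => ?_
    rw [pd_mul_const jj ((hcU i k).mul contDiff_const) (m k) x,
        pd_mul_const jj (hcU i k) (m i) x]
  have hlapqg : (fun x => lap (qf u m) x * qf u m x * h x)
      = fun x => ∑ j, ∑ k, ∑ l, m k * (m l *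
          (pd l (pd j (pd j (fun y => u y k))) x * g x)) := by
    funext x
    have e4 : ∀ jj : Fin 3, pd jj (pd jj (qf u m)) x
        = ∑ i, ∑ k, pd jj (pd jj (pd i (fun y => u y k))) x * m i * m k := by
      intro jj
      rw [hpdq jj, pd_sum jj Finset.univ
        (fun i => fun y => ∑ k, pd jj (pd i (fun y' => u y' k)) y * m i * m k)
        (fun i _ => ContDiff.sum fun k _ => ((hcU2 jj i k).mul contDiff_const).mul contDiff_const) x]
      refine Finset.sum_congr rfl fun i _ => ?_
      rw [pd_sum jj Finset.univ
        (fun k => fun y => pd jj (pd i (fun y' => u y' k)) y * m i * m k)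
        (fun k _ => ((hcU2 jj i k).mul contDiff_const).mul contDiff_const) x]
      refine Finset.sum_congr rfl fun k _ => ?_
      rw [pd_mul_const jj ((hcU2 jj i k).mul contDiff_const) (m k) x,
          pd_mul_const jj (hcU2 jj i k) (m i) x]
    show (∑ jj, pd jj (pd jj (qf u m)) x) * qf u m x * h x = _
    rw [Finset.sum_congr rfl fun jj (_ : jj ∈ Finset.univ) => e4 jj]
    have hgx : g x = qf u m x * h x := rfl
    rw [Finset.sum_mul, Finset.sum_mul]
    refine Finset.sum_congr rfl fun j _ => ?_
    conv_rhs => rw [Finset.sum_comm]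
    rw [Finset.sum_mul, Finset.sum_mul]
    refine Finset.sum_congr rfl fun l _ => ?_
    rw [Finset.sum_mul, Finset.sum_mul]
    refine Finset.sum_congr rfl fun k _ => ?_
    rw [pd_comm3 (hu k) l j x, hgx]
    ring
  rw [hlapqg]
  rw [integral_finset_sum _ (fun j _ => cont_box (continuous_finset_sum _ fun k _ =>
    continuous_finset_sum _ fun l _ => continuous_const.fun_mul (continuous_const.fun_mul
      ((cpd _ (contDiff_pd (hcU j k) j) l).fun_mul contg))))]
  refine Finset.sum_congr rfl fun j _ => ?_
  rw [integral_finset_sum _ (fun k _ => cont_box (continuous_finset_sum _ fun l _ =>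
    continuous_const.fun_mul (continuous_const.fun_mul
      ((cpd _ (contDiff_pd (hcU j k) j) l).fun_mul contg))))]
  refine Finset.sum_congr rfl fun k _ => ?_
  rw [integral_finset_sum _ (fun l _ => cont_box (continuous_const.fun_mul (continuous_const.fun_mul
      ((cpd _ (contDiff_pd (hcU j k) j) l).fun_mul contg))))]
  refine Finset.sum_congr rfl fun l _ => ?_
  rw [integral_const_mul, integral_const_mul]
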